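/- Let C be a channel from a finite set X to a finite set Y, and let Obs₁ : Y → Z₁ and Obs₂ : Y → Z₂ be observers such that Obs₁ is composition-refined by Obs₂ (there exists a channel R : Z₂ → Z₁ with Obs₁ = Obs₂ · R). Then the observed min-capacities satisfy MC(C·Obs₁) ≤ MC(C·Obs₂), where MC is the supremum of the min-entropy leakage over all priors. -/

import Mathlib

/-!
Composition refinement exhibits the coarser observed channel as a post-processing
`C·Obs₁ = (C·Obs₂)·R`. Post-processing cannot increase posterior vulnerability: for each output
the maximum over secrets of an `R`-weighted sum is at most the `R`-weighted sum of the maxima,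
and the rows of `R` sum to one. Hence min-entropy leakage decreases prior by prior, and so does
its supremum, which is finite because leakage into an output set `Y` is at most `log₂ |Y|`.
-/

open scoped Classical BigOperators

noncomputable section

/-- A (row-stochastic) channel matrix. -/
def IsChannel {X Y : Type*} [Fintype Y] (C : X → Y → ℝ) : Prop :=
  (∀ x y, 0 ≤ C x y) ∧ ∀ x, ∑ y, C x y = 1

/-- A prior (probability distribution). -/
def IsPrior {X : Type*} [Fintype X] (π : X → ℝ) : Prop :=
  (∀ x, 0 ≤ π x) ∧ ∑ x, π x = 1

/-- Cascade composition of channels (matrix product). -/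
def cascade {X Y Z : Type*} [Fintype Y] (C : X → Y → ℝ) (D : Y → Z → ℝ) : X → Z → ℝ :=
  fun x z => ∑ y, C x y * D y z

/-- Mutual information (base-2), with `0`-probability terms taken to be `0`. -/
def MI {X Y : Type*} [Fintype X] [Fintype Y] (π : X → ℝ) (C : X → Y → ℝ) : ℝ :=
  ∑ x, ∑ y, if π x * C x y = 0 then 0
    else π x * C x y * Real.logb 2 (C x y / ∑ x', π x' * C x' y)

/-- Prior vulnerability. -/
def Vprior {X : Type*} [Fintype X] [Nonempty X] (π : X → ℝ) : ℝ :=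
  Finset.univ.sup' Finset.univ_nonempty π

/-- Posterior vulnerability. -/
def Vpost {X Y : Type*} [Fintype X] [Nonempty X] [Fintype Y]
    (π : X → ℝ) (C : X → Y → ℝ) : ℝ :=
  ∑ y, Finset.univ.sup' Finset.univ_nonempty (fun x => π x * C x y)

/-- Min-entropy leakage. -/
def MEL {X Y : Type*} [Fintype X] [Nonempty X] [Fintype Y]
    (π : X → ℝ) (C : X → Y → ℝ) : ℝ :=
  Real.logb 2 (Vpost π C) - Real.logb 2 (Vprior π)

/-- Min-capacity: supremum of min-entropy leakage over all priors. -/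
def MinCap {X Y : Type*} [Fintype X] [Nonempty X] [Fintype Y] (C : X → Y → ℝ) : ℝ :=
  sSup {l : ℝ | ∃ π : X → ℝ, IsPrior π ∧ l = MEL π C}

/-- A deterministic observer: every matrix entry is `0` or `1`. -/
def IsDeterministic {Y Z : Type*} (Obs : Y → Z → ℝ) : Prop :=
  ∀ y z, Obs y z = 0 ∨ Obs y z = 1

/-- A `∼`-observer for the relation `r`. -/
def IsSimObserver {Y Z : Type*} (r : Y → Y → Prop) (Obs : Y → Z → ℝ) : Prop :=
  ∀ y₁ y₂, r y₁ y₂ ↔ ∀ z, Obs y₁ z = Obs y₂ z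

section Channels

variable {X Y Z W : Type*}

lemma IsChannel.le_one [Fintype Y] {C : X → Y → ℝ} (hC : IsChannel C) (x : X) (y : Y) :
    C x y ≤ 1 :=
  hC.2 x ▸ Finset.single_le_sum (fun y' _ => hC.1 x y') (Finset.mem_univ y)

lemma IsChannel.cascade [Fintype Y] [Fintype Z] {C : X → Y → ℝ} {D : Y → Z → ℝ}
    (hC : IsChannel C) (hD : IsChannel D) : IsChannel (cascade C D) := by
  refine ⟨fun x z => Finset.sum_nonneg fun y _ => mul_nonneg (hC.1 x y) (hD.1 y z), fun x => ?_⟩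
  show ∑ z, ∑ y, C x y * D y z = 1
  rw [Finset.sum_comm]
  simp only [← Finset.mul_sum, hD.2, mul_one, hC.2 x]

lemma cascade_assoc [Fintype Y] [Fintype Z] (C : X → Y → ℝ) (D : Y → Z → ℝ) (E : Z → W → ℝ) :
    cascade C (cascade D E) = cascade (cascade C D) E := by
  funext x w
  simp only [cascade, Finset.mul_sum, Finset.sum_mul, mul_assoc]
  exact Finset.sum_comm

lemma isPrior_pi_single [Fintype X] (x₀ : X) : IsPrior (Pi.single x₀ (1 : ℝ)) :=
  ⟨fun x => by rw [Pi.single_apply]; split_ifs <;> norm_num, by simp⟩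

end Channels

section Leakage

variable {X Y Z : Type*} [Fintype X] [Nonempty X] [Fintype Y]

lemma le_vprior (π : X → ℝ) (x : X) : π x ≤ Vprior π :=
  Finset.le_sup' π (Finset.mem_univ x)

lemma IsPrior.vprior_pos {π : X → ℝ} (hπ : IsPrior π) : 0 < Vprior π := by
  by_contra! h
  have : ∑ x, π x ≤ 0 := Finset.sum_nonpos fun x _ => (le_vprior π x).trans h
  linarith [hπ.2]

lemma vprior_le_vpost (π : X → ℝ) {D : X → Y → ℝ} (hD : IsChannel D) :
    Vprior π ≤ Vpost π D := by
  obtain ⟨x₀, -, hx₀⟩ := Finset.exists_mem_eq_sup' Finset.univ_nonempty π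
  rw [Vprior, hx₀]
  calc π x₀ = ∑ y, π x₀ * D x₀ y := by rw [← Finset.mul_sum, hD.2 x₀, mul_one]
    _ ≤ Vpost π D := Finset.sum_le_sum fun y _ =>
        Finset.le_sup' (fun x => π x * D x y) (Finset.mem_univ x₀)

lemma vpost_pos {π : X → ℝ} (hπ : IsPrior π) {D : X → Y → ℝ} (hD : IsChannel D) :
    0 < Vpost π D :=
  hπ.vprior_pos.trans_le (vprior_le_vpost π hD)

lemma vpost_le_card_mul_vprior {π : X → ℝ} (hπ : IsPrior π) {D : X → Y → ℝ}
    (hD : IsChannel D) : Vpost π D ≤ Fintype.card Y * Vprior π := by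
  calc Vpost π D ≤ ∑ _y : Y, Vprior π :=
        Finset.sum_le_sum fun y _ => Finset.sup'_le _ _ fun x _ =>
          (mul_le_of_le_one_right (hπ.1 x) (hD.le_one x y)).trans (le_vprior π x)
    _ = Fintype.card Y * Vprior π := by
        rw [Finset.sum_const, Finset.card_univ, nsmul_eq_mul]

lemma vpost_cascade_le [Fintype Z] (π : X → ℝ) (D : X → Y → ℝ) {R : Y → Z → ℝ}
    (hR : IsChannel R) : Vpost π (cascade D R) ≤ Vpost π D := by
  set V : Y → ℝ := fun y => Finset.univ.sup' Finset.univ_nonempty fun x => π x * D x y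
  have hcol : ∀ z, Finset.univ.sup' Finset.univ_nonempty (fun x => π x * cascade D R x z) ≤
      ∑ y, V y * R y z := fun z => Finset.sup'_le _ _ fun x _ => by
    rw [cascade, Finset.mul_sum]
    exact Finset.sum_le_sum fun y _ => by
      rw [← mul_assoc]
      exact mul_le_mul_of_nonneg_right
        (Finset.le_sup' (fun x => π x * D x y) (Finset.mem_univ x)) (hR.1 y z)
  calc Vpost π (cascade D R) ≤ ∑ z, ∑ y, V y * R y z := Finset.sum_le_sum fun z _ => hcol z
    _ = Vpost π D := by
        rw [Finset.sum_comm]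
        simp only [← Finset.mul_sum, hR.2, mul_one, Vpost, V]

lemma mel_le_logb_card {π : X → ℝ} (hπ : IsPrior π) {D : X → Y → ℝ} (hD : IsChannel D) :
    MEL π D ≤ Real.logb 2 (Fintype.card Y) := by
  have hprior := hπ.vprior_pos
  have hle := vpost_le_card_mul_vprior hπ hD
  have hcard : (0 : ℝ) < Fintype.card Y :=
    pos_of_mul_pos_left ((vpost_pos hπ hD).trans_le hle) hprior.le
  rw [MEL, sub_le_iff_le_add, ← Real.logb_mul hcard.ne' hprior.ne']
  exact Real.logb_le_logb_of_le one_lt_two (vpost_pos hπ hD) hle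

lemma mel_cascade_le [Fintype Z] {π : X → ℝ} (hπ : IsPrior π) {D : X → Y → ℝ}
    (hD : IsChannel D) {R : Y → Z → ℝ} (hR : IsChannel R) :
    MEL π (cascade D R) ≤ MEL π D :=
  sub_le_sub_right (Real.logb_le_logb_of_le one_lt_two (vpost_pos hπ (hD.cascade hR))
    (vpost_cascade_le π D hR)) _

lemma bddAbove_mel {D : X → Y → ℝ} (hD : IsChannel D) :
    BddAbove {l : ℝ | ∃ π : X → ℝ, IsPrior π ∧ l = MEL π D} :=
  ⟨Real.logb 2 (Fintype.card Y), by rintro _ ⟨π, hπ, rfl⟩; exact mel_le_logb_card hπ hD⟩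

lemma minCap_cascade_le [Fintype Z] {D : X → Y → ℝ} (hD : IsChannel D) {R : Y → Z → ℝ}
    (hR : IsChannel R) : MinCap (cascade D R) ≤ MinCap D := by
  refine csSup_le ⟨_, _, isPrior_pi_single (Classical.arbitrary X), rfl⟩ ?_
  rintro _ ⟨π, hπ, rfl⟩
  exact (mel_cascade_le hπ hD hR).trans (le_csSup (bddAbove_mel hD) ⟨π, hπ, rfl⟩)

end Leakage

theorem refined_observer_minCap_le_general
    {X Y Z₁ Z₂ : Type*} [Fintype X] [Nonempty X] [Fintype Y] [Fintype Z₁] [Fintype Z₂]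
    (C : X → Y → ℝ) (hC : IsChannel C)
    (Obs₁ : Y → Z₁ → ℝ) (Obs₂ : Y → Z₂ → ℝ)
    (hO₂ : IsChannel Obs₂)
    (href : ∃ R : Z₂ → Z₁ → ℝ, IsChannel R ∧ Obs₁ = cascade Obs₂ R) :
    MinCap (cascade C Obs₁) ≤ MinCap (cascade C Obs₂) := by
  obtain ⟨R, hR, rfl⟩ := href
  rw [cascade_assoc]
  exact minCap_cascade_le (hC.cascade hO₂) hR

/-- a composition-refined observer observes no more min-capacity. -/
theorem refined_observer_minCap_le
    {X Y Z₁ Z₂ : Type*} [Fintype X] [Nonempty X] [Fintype Y] [Fintype Z₁] [Fintype Z₂]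
    (C : X → Y → ℝ) (hC : IsChannel C)
    (Obs₁ : Y → Z₁ → ℝ) (Obs₂ : Y → Z₂ → ℝ)
    (hO₁ : IsChannel Obs₁) (hO₂ : IsChannel Obs₂)
    (href : ∃ R : Z₂ → Z₁ → ℝ, IsChannel R ∧ Obs₁ = cascade Obs₂ R) :
    MinCap (cascade C Obs₁) ≤ MinCap (cascade C Obs₂) :=
  refined_observer_minCap_le_general C hC Obs₁ Obs₂ hO₂ href
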